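/- arXiv:2006.13533 — 2 statements merged into one kernel-verified Lean document; each statement's English description precedes it below -/
import Mathlib

section
/- For the log-sum penalty r_λ(t) = λ·log(1 + t/θ) with λ, θ > 0, the Fréchet subdifferential of w ↦ r_λ(|w|) at w = 0 equals the interval [−λ/θ, λ/θ], and at any w ≠ 0 equals the singleton {λ·sign(w)/(θ + |w|)}. -/
/-!
The Fréchet subdifferential of `f` at `x` only sees the increment `h ↦ f (x + h) - f x` up to
`o(h)`, so it may be computed on a first-order model of that increment. For `a * h + c * |h|` it
is `[a - c, a + c]`, read off from the rays `h > 0` and `h < 0`. Away from `0` the penalty is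
differentiable and its model is linear (`c = 0`); at `0` the model is `(λ / θ) * |h|`, since
`λ / θ` is the derivative of `t ↦ λ log (1 + t / θ)` at `0` (`a = 0`).
-/

open Filter

/-- The Fréchet subdifferential of `f : ℝ → ℝ` at `x`. -/
def frechetSubdiff (f : ℝ → ℝ) (x : ℝ) : Set ℝ :=
  {v | ∀ ε > (0:ℝ), ∀ᶠ h in nhdsWithin (0:ℝ) {0}ᶜ, f (x + h) - f x - v * h ≥ -ε * |h|}

/-- The log-sum penalty. -/
noncomputable def logSumPen (lam θ t : ℝ) : ℝ := lam * Real.log (1 + t / θ)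

open Set Topology Asymptotics

theorem frechetSubdiff_subset_of_isLittleO {f g : ℝ → ℝ} {x y : ℝ}
    (hfg : (fun h => (f (x + h) - f x) - (g (y + h) - g y)) =o[𝓝 0] fun h => h) :
    frechetSubdiff f x ⊆ frechetSubdiff g y := by
  intro v hv ε hε
  have hclose : ∀ᶠ h in 𝓝 0, |(f (x + h) - f x) - (g (y + h) - g y)| ≤ ε / 2 * |h| := by
    simpa using hfg.def (half_pos hε)
  filter_upwards [hv (ε / 2) (half_pos hε), nhdsWithin_le_nhds hclose] with h hf hd
  linarith [le_abs_self ((f (x + h) - f x) - (g (y + h) - g y))]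

theorem frechetSubdiff_eq_of_isLittleO {f g : ℝ → ℝ} {x y : ℝ}
    (hfg : (fun h => (f (x + h) - f x) - (g (y + h) - g y)) =o[𝓝 0] fun h => h) :
    frechetSubdiff f x = frechetSubdiff g y :=
  (frechetSubdiff_subset_of_isLittleO hfg).antisymm
    (frechetSubdiff_subset_of_isLittleO (hfg.neg_left.congr_left fun h => by ring))

theorem nonneg_of_forall_eventually_nhdsGT {k : ℝ}
    (hk : ∀ ε > 0, ∀ᶠ t in 𝓝[>] 0, -ε * t ≤ k * t) : 0 ≤ k := by
  by_contra! hneg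
  obtain ⟨t, ht, ht0⟩ := ((hk (-k / 2) (by linarith)).and self_mem_nhdsWithin).exists
  nlinarith [show (0:ℝ) < t from ht0]

theorem frechetSubdiff_mul_add_mul_abs (a c : ℝ) :
    frechetSubdiff (fun h => a * h + c * |h|) 0 = Icc (a - c) (a + c) := by
  ext v
  constructor
  · intro hv
    have hleft : 0 ≤ v - a + c := by
      refine nonneg_of_forall_eventually_nhdsGT fun ε hε => ?_
      have hflip : Tendsto Neg.neg (𝓝[>] (0:ℝ)) (𝓝[<] 0) := by
        simpa using tendsto_neg_nhdsGT_neg (a := (0:ℝ))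
      filter_upwards [hflip.eventually ((hv ε hε).filter_mono (nhdsLT_le_nhdsNE 0)),
        self_mem_nhdsWithin] with t ht (ht0 : 0 < t)
      simp only [zero_add, mul_zero, abs_zero, add_zero, sub_zero, abs_neg, abs_of_pos ht0] at ht
      linarith
    have hright : 0 ≤ a + c - v := by
      refine nonneg_of_forall_eventually_nhdsGT fun ε hε => ?_
      filter_upwards [(hv ε hε).filter_mono (nhdsGT_le_nhdsNE 0), self_mem_nhdsWithin]
        with t ht (ht0 : 0 < t)
      simp only [zero_add, mul_zero, abs_zero, add_zero, sub_zero, abs_of_pos ht0] at ht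
      linarith
    exact ⟨by linarith, by linarith⟩
  · rintro ⟨hlo, hhi⟩ ε hε
    refine Eventually.of_forall fun h => ?_
    have hslope : |a - v| ≤ c := abs_le.mpr ⟨by linarith, by linarith⟩
    have hlin : -(|a - v| * |h|) ≤ (a - v) * h := abs_mul (a - v) h ▸ neg_abs_le _
    simp only [zero_add, mul_zero, abs_zero, add_zero, sub_zero]
    nlinarith [abs_nonneg h, mul_le_mul_of_nonneg_right hslope (abs_nonneg h)]

theorem frechetSubdiff_of_hasDerivAt {f : ℝ → ℝ} {d x : ℝ} (hf : HasDerivAt f d x) :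
    frechetSubdiff f x = {d} := by
  rw [frechetSubdiff_eq_of_isLittleO (g := fun h => d * h + 0 * |h|) (y := 0)
    ((hasDerivAt_iff_isLittleO_nhds_zero.mp hf).congr_left fun h => by simp [mul_comm]),
    frechetSubdiff_mul_add_mul_abs]
  simp

theorem frechetSubdiff_comp_abs_zero {φ : ℝ → ℝ} {c : ℝ} (hφ : HasDerivWithinAt φ c (Ici 0) 0) :
    frechetSubdiff (fun w => φ |w|) 0 = Icc (-c) c := by
  have habs : Tendsto abs (𝓝 (0:ℝ)) (𝓝[≥] 0) :=
    tendsto_nhdsWithin_iff.mpr ⟨continuous_abs.tendsto' 0 0 abs_zero,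
      Eventually.of_forall abs_nonneg⟩
  have hlin := (hasDerivWithinAt_iff_isLittleO.mp hφ).comp_tendsto habs
  rw [frechetSubdiff_eq_of_isLittleO (g := fun h => 0 * h + c * |h|) (y := 0)
    (isLittleO_abs_right.mp <| hlin.congr (fun h => by simp [mul_comm]) fun h => by simp),
    frechetSubdiff_mul_add_mul_abs]
  simp

theorem hasDerivAt_logSumPen (lam : ℝ) {θ t : ℝ} (hθ : θ ≠ 0) (ht : θ + t ≠ 0) :
    HasDerivAt (logSumPen lam θ) (lam / (θ + t)) t := by
  have hne : 1 + t / θ ≠ 0 := by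
    rwa [one_add_div hθ, div_ne_zero_iff, and_iff_left hθ]
  refine (((((hasDerivAt_id t).div_const θ).const_add 1).log hne).const_mul lam).congr_deriv ?_
  simp only [id]
  field_simp

theorem Real.sign_eq_coe_sign (r : ℝ) : Real.sign r = (SignType.sign r : ℝ) := by
  rcases lt_trichotomy r 0 with hr | rfl | hr
  · simp [Real.sign_of_neg, hr]
  · simp
  · simp [Real.sign_of_pos, hr]

theorem logsum_subdiff_general (lam θ : ℝ) (hθ : 0 < θ) :
    frechetSubdiff (fun w => logSumPen lam θ |w|) 0 = Set.Icc (-(lam / θ)) (lam / θ) ∧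
    ∀ w : ℝ, w ≠ 0 →
      frechetSubdiff (fun w => logSumPen lam θ |w|) w
        = {lam * Real.sign w / (θ + |w|)} := by
  refine ⟨?_, fun w hw => ?_⟩
  · have hφ := hasDerivAt_logSumPen lam hθ.ne' (t := 0) (by simpa using hθ.ne')
    simpa using frechetSubdiff_comp_abs_zero hφ.hasDerivWithinAt
  · have hφ := hasDerivAt_logSumPen lam hθ.ne' (t := |w|) (by positivity)
    have hd : HasDerivAt (fun w => logSumPen lam θ |w|) (lam * Real.sign w / (θ + |w|)) w := by
      rw [Real.sign_eq_coe_sign, mul_div_right_comm]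
      exact hφ.comp w (hasDerivAt_abs hw)
    exact frechetSubdiff_of_hasDerivAt hd

/-- the Fréchet subdifferential of the log-sum penalty `w ↦ r_λ(|w|)`
is `[-λ/θ, λ/θ]` at `0` and `{λ·sign(w)/(θ+|w|)}` at any `w ≠ 0`. -/
theorem logsum_subdiff (lam θ : ℝ) (hlam : 0 < lam) (hθ : 0 < θ) :
    frechetSubdiff (fun w => logSumPen lam θ |w|) 0 = Set.Icc (-(lam / θ)) (lam / θ) ∧
    ∀ w : ℝ, w ≠ 0 →
      frechetSubdiff (fun w => logSumPen lam θ |w|) w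
        = {lam * Real.sign w / (θ + |w|)} :=
  logsum_subdiff_general lam θ hθ
end

section
/- Suppose a sequence (α_k) ⊂ (0,1] satisfies, for nonnegative error tolerances (ξ_k) with Σ_k ξ_k < ∞ and for constants γ̲, τ̲, L > 0 and a lower-bounded function f with iterates w_k, the inequality f(w_{k+1}) ≤ f(w_k) − (γ̲/L²)·(max(((1−α_k)/α_k)·τ̲ − ξ_{k+1}, 0))². Then ((1−α_k)/α_k)·τ̲ − ξ_{k+1} → 0, and hence α_k → 1. -/
open Filter Topology

/-! Telescoping the sufficient-decrease inequalities bounds the partial sums of the squared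
decrements by `f (w 0) - inf f`, so the squares are summable and the decrements
`max (((1 - α k) / α k) * τ̲ - ξ (k + 1)) 0` tend to `0`. The quantity itself is squeezed between
`-ξ (k + 1)` and that decrement, and `ξ k → 0` because `ξ` is summable; then
`(1 - α k) / α k → 0`, and `α k = (1 + (1 - α k) / α k)⁻¹ → 1`. -/

theorem summable_of_le_sub_of_bddBelow {u a : ℕ → ℝ} (hu : BddBelow (Set.range u))
    (ha : ∀ k, 0 ≤ a k) (hdec : ∀ k, u (k + 1) ≤ u k - a k) : Summable a := by
  obtain ⟨B, hB⟩ := hu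
  refine summable_of_sum_range_le (c := u 0 - B) ha fun n => ?_
  calc ∑ k ∈ Finset.range n, a k
      ≤ ∑ k ∈ Finset.range n, (u k - u (k + 1)) :=
        Finset.sum_le_sum fun k _ => by linarith [hdec k]
    _ = u 0 - u n := Finset.sum_range_sub' u n
    _ ≤ u 0 - B := by linarith [hB (Set.mem_range_self n)]

theorem tendsto_zero_of_summable_sq {g : ℕ → ℝ} (h : Summable fun k => g k ^ 2) :
    Tendsto g atTop (𝓝 0) := by
  have habs : Tendsto (fun k => |g k|) atTop (𝓝 0) := by
    simpa only [Real.sqrt_sq_eq_abs, Real.sqrt_zero] using h.tendsto_atTop_zero.sqrt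
  exact (tendsto_zero_iff_abs_tendsto_zero g).2 habs

theorem tendsto_zero_of_tendsto_max_zero {ι : Type*} {l : Filter ι} {x e : ι → ℝ}
    (hmax : Tendsto (fun k => max (x k) 0) l (𝓝 0)) (he : Tendsto e l (𝓝 0))
    (hle : ∀ k, -e k ≤ x k) : Tendsto x l (𝓝 0) :=
  tendsto_of_tendsto_of_tendsto_of_le_of_le (by simpa using he.neg) hmax hle
    fun k => le_max_left _ _

theorem tendsto_one_of_tendsto_one_sub_div_self {ι : Type*} {l : Filter ι} {α : ι → ℝ}
    (hα : ∀ k, α k ≠ 0) (h : Tendsto (fun k => (1 - α k) / α k) l (𝓝 0)) :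
    Tendsto α l (𝓝 1) := by
  have hinv : Tendsto (fun k => (1 + (1 - α k) / α k)⁻¹) l (𝓝 1) := by
    simpa using (tendsto_const_nhds.add h).inv₀ (by norm_num : (1 : ℝ) + 0 ≠ 0)
  refine hinv.congr fun k => ?_
  rw [one_add_div (hα k), add_sub_cancel, inv_div, div_one]

theorem inexact_fireworks_convergence_general {d : ℕ}
    (f : EuclideanSpace ℝ (Fin d) → ℝ) (hbdd : BddBelow (Set.range f))
    (w : ℕ → EuclideanSpace ℝ (Fin d)) (α ξ : ℕ → ℝ)
    (γlb τlb L : ℝ) (hγlb : 0 < γlb) (hτlb : 0 < τlb) (hL : 0 < L)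
    (hα : ∀ k, α k ∈ Set.Ioc (0:ℝ) 1)
    (hξsum : Summable ξ)
    (hdec : ∀ k, f (w (k + 1)) ≤ f (w k)
      - (γlb / L ^ 2) * (max (((1 - α k) / α k) * τlb - ξ (k + 1)) 0) ^ 2) :
    Tendsto (fun k => ((1 - α k) / α k) * τlb - ξ (k + 1)) atTop (nhds 0) ∧
    Tendsto α atTop (nhds 1) := by
  have hc : 0 < γlb / L ^ 2 := by positivity
  have hsum := summable_of_le_sub_of_bddBelow (u := fun k => f (w k))
    (hbdd.mono (Set.range_comp_subset_range w f)) (fun k => by positivity) hdec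
  have hmax := tendsto_zero_of_summable_sq ((summable_mul_left_iff hc.ne').1 hsum)
  have hξ : Tendsto (fun k => ξ (k + 1)) atTop (𝓝 0) :=
    hξsum.tendsto_atTop_zero.comp (tendsto_add_atTop_nat 1)
  have hr_nonneg : ∀ k, 0 ≤ (1 - α k) / α k := fun k =>
    div_nonneg (sub_nonneg.2 (hα k).2) (hα k).1.le
  have he := tendsto_zero_of_tendsto_max_zero hmax hξ fun k => by
    nlinarith [hr_nonneg k]
  have hr : Tendsto (fun k => (1 - α k) / α k) atTop (𝓝 0) := by
    simpa [hτlb.ne'] using (he.add hξ).div_const τlb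
  exact ⟨he, tendsto_one_of_tendsto_one_sub_div_self (fun k => (hα k).1.ne') hr⟩

/-- convergence of the inexact FireWorks algorithm: the
sufficient-decrease inequality with summable tolerances forces
`((1-α_k)/α_k)·τ̲ - ξ_{k+1} → 0` and hence `α_k → 1`. -/
theorem inexact_fireworks_convergence {d : ℕ}
    (f : EuclideanSpace ℝ (Fin d) → ℝ) (hbdd : BddBelow (Set.range f))
    (w : ℕ → EuclideanSpace ℝ (Fin d)) (α ξ : ℕ → ℝ)
    (γlb τlb L : ℝ) (hγlb : 0 < γlb) (hτlb : 0 < τlb) (hL : 0 < L)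
    (hα : ∀ k, α k ∈ Set.Ioc (0:ℝ) 1)
    (hξ : ∀ k, 0 ≤ ξ k) (hξsum : Summable ξ)
    (hdec : ∀ k, f (w (k + 1)) ≤ f (w k)
      - (γlb / L ^ 2) * (max (((1 - α k) / α k) * τlb - ξ (k + 1)) 0) ^ 2) :
    Tendsto (fun k => ((1 - α k) / α k) * τlb - ξ (k + 1)) atTop (nhds 0) ∧
    Tendsto α atTop (nhds 1) :=
  inexact_fireworks_convergence_general f hbdd w α ξ γlb τlb L hγlb hτlb hL hα hξsum hdec
end
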